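/- The Bayes operator Φ is Lipschitz in the filter and observation arguments in the averaged sense: for all θ, θ' ∈ P(X) and y, y' ∈ Y, E[d_P(Φ(Y,θ,y), Φ(Y,θ',y'))] ≤ δ(r̄ + L_r)(1 + δ r̄)[d_P(θ,θ') + |y − y'|], where Y ∼ ν. -/

import Mathlib

open MeasureTheory Set
noncomputable section

abbrev Em (m : ℕ) := EuclideanSpace ℝ (Fin m)

/-- bounded Lipschitz functions with `‖f‖_sup + Lip f ≤ 1` -/
def IsLip1 {E : Type*} [PseudoMetricSpace E] (f : E → ℝ) : Prop :=
  ∃ C L : ℝ, 0 ≤ C ∧ 0 ≤ L ∧ (∀ x, |f x| ≤ C) ∧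
    (∀ x y, |f x - f y| ≤ L * dist x y) ∧ C + L ≤ 1

/-- dual bounded-Lipschitz distance on probability measures -/
noncomputable def dP {E : Type*} [PseudoMetricSpace E] [MeasurableSpace E]
    (μ ν : Measure E) : ℝ :=
  ⨆ f : {f : E → ℝ // IsLip1 f}, (∫ x, f.1 x ∂μ - ∫ x, f.1 x ∂ν)

/-- The Bayes operator `Φ(v,θ,y)(du) = r(u,v,θ,y)/r(λ,v,θ,y) λ(du)`. -/
noncomputable def BayesPhi {m n : ℕ} (r : Em m → Em n → Em m → Em n → ℝ)
    (lam : Measure (Em m)) (v : Em n) (θ : Measure (Em m)) (y : Em n) : Measure (Em m) :=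
  lam.withDensity fun u => ENNReal.ofReal
    ((∫ x, r u v x y ∂θ) / (∫ u', ∫ x, r u' v x y ∂θ ∂lam))

/-!
Testing `Φ(v,θ,y)` against a bounded-Lipschitz `f` gives, by Fubini, the quotient `N_f / N_1` with
`N_f(θ,y) = ∫∫ r(u,v,x,y) f(u) λ(du) θ(dx)`. The inner integral is bounded by `r̄` and
`L_r`-Lipschitz in `x` and in `y`, so `|N_f(θ,y) - N_f(θ',y')| ≤ (r̄ + L_r)(d_P(θ,θ') + |y - y'|)`.
Since `N_1 ≥ δ⁻¹` and `|N_f| ≤ r̄`, the quotient rule bounds `d_P(Φ(v,θ,y), Φ(v,θ',y'))` uniformly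
in `v`, and the bound survives integration against `ν`.
-/

lemma abs_integral_le_of_forall_abs_le {α : Type*} [MeasurableSpace α] {μ : Measure α}
    [IsProbabilityMeasure μ] {f : α → ℝ} {C : ℝ} (h : ∀ a, |f a| ≤ C) : |∫ a, f a ∂μ| ≤ C := by
  simpa using norm_integral_le_of_norm_le_const (μ := μ) (f := f) (.of_forall h)

lemma integral_withDensity_ofReal_div {α : Type*} [MeasurableSpace α] {μ : Measure α}
    {h : α → ℝ} (hh : Measurable h) (h0 : ∀ a, 0 ≤ h a) {Z : ℝ} (hZ : 0 ≤ Z) (f : α → ℝ) :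
    ∫ a, f a ∂μ.withDensity (fun a => ENNReal.ofReal (h a / Z)) = (∫ a, h a * f a ∂μ) / Z := by
  rw [integral_withDensity_eq_integral_toReal_smul (hh.div_const Z).ennreal_ofReal
    (.of_forall fun _ => ENNReal.ofReal_lt_top), ← integral_div]
  congr 1 with a
  rw [ENNReal.toReal_ofReal (div_nonneg (h0 a) hZ), smul_eq_mul]
  ring

lemma abs_div_sub_div_le {N N' D D' M R δ : ℝ} (hδ : 0 < δ) (hD : δ⁻¹ ≤ D) (hD' : δ⁻¹ ≤ D')
    (hN' : |N'| ≤ R) (hN : |N - N'| ≤ M) (hDD' : |D - D'| ≤ M) :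
    |N / D - N' / D'| ≤ δ * M * (1 + δ * R) := by
  have hD0 : 0 < D := (inv_pos.2 hδ).trans_le hD
  have hD'0 : 0 < D' := (inv_pos.2 hδ).trans_le hD'
  have hDinv : D⁻¹ ≤ δ := inv_le_of_inv_le₀ hδ hD
  have hD'inv : D'⁻¹ ≤ δ := inv_le_of_inv_le₀ hδ hD'
  have hM : 0 ≤ M := (abs_nonneg _).trans hN
  have hsplit : N / D - N' / D' = (N - N') * D⁻¹ + N' * (D' - D) * (D⁻¹ * D'⁻¹) := by
    field_simp
    ring
  rw [hsplit]
  calc |(N - N') * D⁻¹ + N' * (D' - D) * (D⁻¹ * D'⁻¹)|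
      ≤ |N - N'| * D⁻¹ + |N'| * |D - D'| * (D⁻¹ * D'⁻¹) := by
        refine (abs_add_le _ _).trans_eq ?_
        rw [abs_mul, abs_mul, abs_mul, abs_sub_comm D', abs_of_pos (inv_pos.2 hD0),
          abs_of_pos (mul_pos (inv_pos.2 hD0) (inv_pos.2 hD'0))]
    _ ≤ M * δ + R * M * (δ * δ) := by
        have hR : 0 ≤ R := (abs_nonneg _).trans hN'
        gcongr
    _ = δ * M * (1 + δ * R) := by ring

namespace IsLip1

variable {E : Type*} [PseudoMetricSpace E] {f : E → ℝ}

lemma abs_le_one (hf : IsLip1 f) (x : E) : |f x| ≤ 1 := by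
  obtain ⟨C, L, -, hL, hC, -, hCL⟩ := hf
  exact (hC x).trans (by linarith)

lemma continuous (hf : IsLip1 f) : Continuous f := by
  obtain ⟨C, L, -, hL, -, hlip, -⟩ := hf
  refine (LipschitzWith.of_dist_le_mul (K := L.toNNReal) fun x y => ?_).continuous
  rw [Real.coe_toNNReal _ hL, Real.dist_eq]
  exact hlip x y

end IsLip1

lemma isLip1_const {E : Type*} [PseudoMetricSpace E] {c : ℝ} (hc : |c| ≤ 1) :
    IsLip1 fun _ : E => c :=
  ⟨|c|, 0, abs_nonneg c, le_rfl, fun _ => le_rfl, fun _ _ => by simp, by simpa using hc⟩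

lemma isLip1_div_add {E : Type*} [PseudoMetricSpace E] {h : E → ℝ} {B L : ℝ}
    (hB : 0 ≤ B) (hL : 0 ≤ L) (hBL : 0 < B + L)
    (hbd : ∀ x, |h x| ≤ B) (hlip : ∀ x y, |h x - h y| ≤ L * dist x y) :
    IsLip1 fun x => h x / (B + L) := by
  refine ⟨B / (B + L), L / (B + L), by positivity, by positivity, fun x => ?_, fun x y => ?_, ?_⟩
  · rw [abs_div, abs_of_pos hBL]
    exact div_le_div_of_nonneg_right (hbd x) hBL.le
  · rw [div_sub_div_same, abs_div, abs_of_pos hBL, div_mul_eq_mul_div]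
    exact div_le_div_of_nonneg_right (hlip x y) hBL.le
  · rw [← add_div, div_self hBL.ne']

section dP

variable {E : Type*} [PseudoMetricSpace E] [MeasurableSpace E] {μ ν : Measure E}

lemma bddAbove_integral_sub_integral [IsProbabilityMeasure μ] [IsProbabilityMeasure ν] :
    BddAbove (range fun f : {f : E → ℝ // IsLip1 f} => ∫ x, f.1 x ∂μ - ∫ x, f.1 x ∂ν) := by
  refine ⟨2, ?_⟩
  rintro _ ⟨⟨f, hf⟩, rfl⟩
  have hμ := abs_le.1 (abs_integral_le_of_forall_abs_le (μ := μ) hf.abs_le_one)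
  have hν := abs_le.1 (abs_integral_le_of_forall_abs_le (μ := ν) hf.abs_le_one)
  dsimp only
  linarith [hμ.2, hν.1]

lemma integral_sub_integral_le_dP [IsProbabilityMeasure μ] [IsProbabilityMeasure ν]
    {f : E → ℝ} (hf : IsLip1 f) : ∫ x, f x ∂μ - ∫ x, f x ∂ν ≤ dP μ ν :=
  le_ciSup bddAbove_integral_sub_integral (⟨f, hf⟩ : {f : E → ℝ // IsLip1 f})

lemma dP_nonneg (μ ν : Measure E) : 0 ≤ dP μ ν := by
  by_cases hbdd : BddAbove (range fun f : {f : E → ℝ // IsLip1 f} =>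
      ∫ x, f.1 x ∂μ - ∫ x, f.1 x ∂ν)
  · simpa [dP] using le_ciSup hbdd ⟨fun _ => 0, isLip1_const (by simp)⟩
  · rw [dP, ciSup_of_not_bddAbove hbdd, Real.sSup_empty]

lemma dP_le {K : ℝ} (h : ∀ f : E → ℝ, IsLip1 f → ∫ x, f x ∂μ - ∫ x, f x ∂ν ≤ K) :
    dP μ ν ≤ K :=
  haveI : Nonempty {f : E → ℝ // IsLip1 f} := ⟨⟨fun _ => 0, isLip1_const (by simp)⟩⟩
  ciSup_le fun f => h f.1 f.2

lemma abs_integral_sub_integral_le_mul_dP [IsProbabilityMeasure μ] [IsProbabilityMeasure ν]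
    {G : E → ℝ} {B L : ℝ} (hB : 0 ≤ B) (hL : 0 ≤ L)
    (hbd : ∀ x, |G x| ≤ B) (hlip : ∀ x y, |G x - G y| ≤ L * dist x y) :
    |∫ x, G x ∂μ - ∫ x, G x ∂ν| ≤ (B + L) * dP μ ν := by
  rcases (add_nonneg hB hL).eq_or_lt with hBL | hBL
  · have hG : ∀ x, G x = 0 := fun x => abs_nonpos_iff.1 <| (hbd x).trans (by linarith)
    simp [hG, ← hBL]
  have key : ∀ s : ℝ, |s| = 1 →
      s * (∫ x, G x ∂μ - ∫ x, G x ∂ν) ≤ (B + L) * dP μ ν := by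
    intro s hs
    have hsG := isLip1_div_add hB hL hBL (h := fun x => s * G x)
      (fun x => by rw [abs_mul, hs, one_mul]; exact hbd x)
      (fun x y => by rw [← mul_sub, abs_mul, hs, one_mul]; exact hlip x y)
    have := integral_sub_integral_le_dP (μ := μ) (ν := ν) hsG
    rw [integral_div, integral_div, ← sub_div, div_le_iff₀ hBL, integral_const_mul,
      integral_const_mul, ← mul_sub] at this
    linarith
  exact abs_le.2 ⟨by linarith [key (-1) (by simp)], by simpa using key 1 (by simp)⟩

end dP

structure IsBoundedLipschitzDensity {X Y : Type*} [PseudoMetricSpace X] [MeasurableSpace X]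
    [PseudoMetricSpace Y] [MeasurableSpace Y] (r : X → Y → X → Y → ℝ) (rbar Lr : ℝ) : Prop where
  measurable : Measurable fun p : (X × Y) × X × Y => r p.1.1 p.1.2 p.2.1 p.2.2
  nonneg : ∀ u v x y, 0 ≤ r u v x y
  le_bound : ∀ u v x y, r u v x y ≤ rbar
  lipschitz : ∀ u u' v x x' y y',
    |r u v x y - r u' v x' y'| ≤ Lr * (dist u u' + dist x x' + dist y y')

def bayesNumerator {X Y : Type*} [MeasurableSpace X] (r : X → Y → X → Y → ℝ)
    (lam θ : Measure X) (v y : Y) (f : X → ℝ) : ℝ :=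
  ∫ x, ∫ u, r u v x y * f u ∂lam ∂θ

namespace IsBoundedLipschitzDensity

section

variable {X Y : Type*} [PseudoMetricSpace X] [MeasurableSpace X] [PseudoMetricSpace Y]
  [MeasurableSpace Y] {r : X → Y → X → Y → ℝ} {rbar Lr : ℝ}
  (hr : IsBoundedLipschitzDensity r rbar Lr) {lam θ θ' : Measure X} {f : X → ℝ}
include hr

lemma bound_nonneg [Nonempty X] (v : Y) : 0 ≤ rbar :=
  let x : X := Classical.arbitrary X
  (hr.nonneg x v x v).trans (hr.le_bound x v x v)

lemma measurable_uncurry (v y : Y) : Measurable fun p : X × X => r p.1 v p.2 y :=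
  hr.measurable.comp ((measurable_fst.prodMk measurable_const).prodMk
    (measurable_snd.prodMk measurable_const))

lemma abs_mul_le (hf : ∀ u, |f u| ≤ 1) (u : X) (v : Y) (x : X) (y : Y) :
    |r u v x y * f u| ≤ rbar := by
  rw [abs_mul, abs_of_nonneg (hr.nonneg u v x y)]
  exact (mul_le_of_le_one_right (hr.nonneg u v x y) (hf u)).trans (hr.le_bound u v x y)

lemma abs_integral_mul_le [IsProbabilityMeasure lam] (hf : ∀ u, |f u| ≤ 1) (v : Y) (x : X)
    (y : Y) : |∫ u, r u v x y * f u ∂lam| ≤ rbar :=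
  abs_integral_le_of_forall_abs_le (hr.abs_mul_le hf · v x y)

lemma integrable_mul [IsFiniteMeasure lam] (hfm : Measurable f) (hf : ∀ u, |f u| ≤ 1) (v : Y)
    (x : X) (y : Y) : Integrable (fun u => r u v x y * f u) lam :=
  .of_bound (((hr.measurable_uncurry v y).comp (measurable_id.prodMk measurable_const)).mul
    hfm).aestronglyMeasurable rbar (.of_forall (hr.abs_mul_le hf · v x y))

lemma integrable_integral_mul [IsProbabilityMeasure lam] [IsFiniteMeasure θ]
    (hfm : Measurable f) (hf : ∀ u, |f u| ≤ 1) (v y : Y) :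
    Integrable (fun x => ∫ u, r u v x y * f u ∂lam) θ := by
  have hmeas : StronglyMeasurable fun p : X × X => r p.2 v p.1 y * f p.2 :=
    (((hr.measurable_uncurry v y).comp measurable_swap).mul
      (hfm.comp measurable_snd)).stronglyMeasurable
  exact .of_bound hmeas.integral_prod_right'.aestronglyMeasurable rbar
    (.of_forall (hr.abs_integral_mul_le hf v · y))

lemma abs_integral_mul_sub_le [IsProbabilityMeasure lam] (hfm : Measurable f)
    (hf : ∀ u, |f u| ≤ 1) (v : Y) (x x' : X) (y y' : Y) :
    |∫ u, r u v x y * f u ∂lam - ∫ u, r u v x' y' * f u ∂lam| ≤ Lr * (dist x x' + dist y y') := by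
  rw [← integral_sub (hr.integrable_mul hfm hf v x y) (hr.integrable_mul hfm hf v x' y')]
  refine abs_integral_le_of_forall_abs_le fun u => ?_
  rw [← sub_mul, abs_mul]
  have := hr.lipschitz u u v x x' y y'
  rw [dist_self, zero_add] at this
  exact (mul_le_of_le_one_right (abs_nonneg _) (hf u)).trans this

variable [IsProbabilityMeasure lam] [IsProbabilityMeasure θ]

lemma integral_integral_mul_swap (hfm : Measurable f) (hf : ∀ u, |f u| ≤ 1) (v y : Y) :
    ∫ u, ∫ x, r u v x y * f u ∂θ ∂lam = bayesNumerator r lam θ v y f :=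
  integral_integral_swap <| .of_bound
    ((hr.measurable_uncurry v y).mul (hfm.comp measurable_fst)).aestronglyMeasurable rbar
    (.of_forall fun p => hr.abs_mul_le hf p.1 v p.2 y)

lemma abs_bayesNumerator_le (hf : ∀ u, |f u| ≤ 1) (v y : Y) :
    |bayesNumerator r lam θ v y f| ≤ rbar :=
  abs_integral_le_of_forall_abs_le (hr.abs_integral_mul_le hf v · y)

lemma inv_le_bayesNumerator_one {δ : ℝ} (hlow : ∀ v x y, δ⁻¹ ≤ ∫ u, r u v x y ∂lam) (v y : Y) :
    δ⁻¹ ≤ bayesNumerator r lam θ v y fun _ => 1 := by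
  have hint := hr.integrable_integral_mul (lam := lam) (θ := θ) (f := fun _ => 1)
    measurable_const (by simp) v y
  change δ⁻¹ ≤ ∫ x, ∫ u, r u v x y * 1 ∂lam ∂θ
  simp only [mul_one] at hint ⊢
  simpa using integral_mono (integrable_const δ⁻¹) hint (hlow v · y)

lemma abs_bayesNumerator_sub_le [OpensMeasurableSpace X] [IsProbabilityMeasure θ'] (hLr : 0 ≤ Lr)
    (hf : IsLip1 f) (v y y' : Y) :
    |bayesNumerator r lam θ v y f - bayesNumerator r lam θ' v y' f|
      ≤ (rbar + Lr) * (dP θ θ' + dist y y') := by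
  have := nonempty_of_isProbabilityMeasure θ
  have hfm := hf.continuous.measurable
  have hfb := hf.abs_le_one
  set H : Y → X → ℝ := fun y x => ∫ u, r u v x y * f u ∂lam
  have hθ : |∫ x, H y x ∂θ - ∫ x, H y x ∂θ'| ≤ (rbar + Lr) * dP θ θ' :=
    abs_integral_sub_integral_le_mul_dP (hr.bound_nonneg v) hLr
      (hr.abs_integral_mul_le hfb v · y)
      fun x x' => by simpa using hr.abs_integral_mul_sub_le hfm hfb v x x' y y
  have hy : |∫ x, H y x ∂θ' - ∫ x, H y' x ∂θ'| ≤ Lr * dist y y' := by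
    rw [← integral_sub (hr.integrable_integral_mul hfm hfb v y)
      (hr.integrable_integral_mul hfm hfb v y')]
    exact abs_integral_le_of_forall_abs_le fun x => by
      simpa using hr.abs_integral_mul_sub_le hfm hfb v x x y y'
  have hrbar : 0 ≤ rbar * dist y y' := mul_nonneg (hr.bound_nonneg v) dist_nonneg
  calc |bayesNumerator r lam θ v y f - bayesNumerator r lam θ' v y' f|
      ≤ |∫ x, H y x ∂θ - ∫ x, H y x ∂θ'| + |∫ x, H y x ∂θ' - ∫ x, H y' x ∂θ'| :=
        _root_.abs_sub_le _ _ _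
    _ ≤ (rbar + Lr) * (dP θ θ' + dist y y') := by linarith

end

section

variable {m n : ℕ} {r : Em m → Em n → Em m → Em n → ℝ} {rbar Lr : ℝ}
  (hr : IsBoundedLipschitzDensity r rbar Lr) {lam θ θ' : Measure (Em m)}
  [IsProbabilityMeasure lam] [IsProbabilityMeasure θ] {f : Em m → ℝ}
include hr

lemma integral_bayesPhi (hfm : Measurable f) (hf : ∀ u, |f u| ≤ 1) (v y : Em n) :
    ∫ u, f u ∂BayesPhi r lam v θ y
      = bayesNumerator r lam θ v y f / bayesNumerator r lam θ v y fun _ => 1 := by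
  have hg : Measurable fun u => ∫ x, r u v x y ∂θ :=
    (hr.measurable_uncurry v y).stronglyMeasurable.integral_prod_right'.measurable
  have hg0 : ∀ u, 0 ≤ ∫ x, r u v x y ∂θ := fun u => integral_nonneg (hr.nonneg u v · y)
  rw [BayesPhi, integral_withDensity_ofReal_div hg hg0 (integral_nonneg hg0),
    ← hr.integral_integral_mul_swap hfm hf, ← hr.integral_integral_mul_swap measurable_const
      (by simp)]
  simp only [integral_mul_const, mul_one]

lemma dP_bayesPhi_le [IsProbabilityMeasure θ'] {δ : ℝ} (hδ : 0 < δ) (hLr : 0 ≤ Lr)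
    (hlow : ∀ v x y, δ⁻¹ ≤ ∫ u, r u v x y ∂lam) (v y y' : Em n) :
    dP (BayesPhi r lam v θ y) (BayesPhi r lam v θ' y')
      ≤ δ * (rbar + Lr) * (1 + δ * rbar) * (dP θ θ' + dist y y') := by
  refine dP_le fun f hf => ?_
  have hfm := hf.continuous.measurable
  rw [hr.integral_bayesPhi hfm hf.abs_le_one, hr.integral_bayesPhi hfm hf.abs_le_one]
  refine (le_abs_self _).trans <| (abs_div_sub_div_le hδ (hr.inv_le_bayesNumerator_one hlow v y)
    (hr.inv_le_bayesNumerator_one hlow v y') (hr.abs_bayesNumerator_le hf.abs_le_one v y')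
    (hr.abs_bayesNumerator_sub_le hLr hf v y y')
    (hr.abs_bayesNumerator_sub_le hLr (isLip1_const (by simp)) v y y')).trans_eq (by ring)

end

end IsBoundedLipschitzDensity

theorem stmt_4_general {m n : ℕ} (Lr δ rbar : ℝ) (hLr : 0 < Lr) (hδ : 0 < δ)
    (r : Em m → Em n → Em m → Em n → ℝ)
    (lam : Measure (Em m)) (nu : Measure (Em n))
    [IsProbabilityMeasure lam] [IsProbabilityMeasure nu]
    (hr_meas : Measurable fun p : (Em m × Em n) × Em m × Em n => r p.1.1 p.1.2 p.2.1 p.2.2)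
    (hr_nonneg : ∀ u v x y, 0 ≤ r u v x y)
    (hr_bdd : ∀ u v x y, r u v x y ≤ rbar)
    (hr_lip : ∀ u u' v x x' y y',
      |r u v x y - r u' v x' y'| ≤ Lr * (dist u u' + dist x x' + dist y y'))
    (hlow : ∀ (v : Em n) (x : Em m) (y : Em n), δ⁻¹ ≤ ∫ u, r u v x y ∂lam) :
    ∀ (θ θ' : Measure (Em m)), IsProbabilityMeasure θ → IsProbabilityMeasure θ' →
    ∀ (y y' : Em n),
      (∫ v, dP (BayesPhi r lam v θ y) (BayesPhi r lam v θ' y') ∂nu)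
        ≤ δ * (rbar + Lr) * (1 + δ * rbar) * (dP θ θ' + dist y y') := by
  intro θ θ' _ _ y y'
  have hr : IsBoundedLipschitzDensity r rbar Lr := ⟨hr_meas, hr_nonneg, hr_bdd, hr_lip⟩
  have hbound v := hr.dP_bayesPhi_le (lam := lam) (θ := θ) (θ' := θ') hδ hLr.le hlow v y y'
  have hnorm := norm_integral_le_of_norm_le_const (μ := nu) <| .of_forall fun v =>
    (Real.norm_of_nonneg (dP_nonneg _ _)).trans_le (hbound v)
  simpa using (le_abs_self _).trans hnorm

theorem stmt_4 {m n : ℕ} (Lr δ rbar : ℝ) (hLr : 0 < Lr) (hδ : 0 < δ)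
    (r : Em m → Em n → Em m → Em n → ℝ)
    (lam : Measure (Em m)) (nu : Measure (Em n))
    [IsProbabilityMeasure lam] [IsProbabilityMeasure nu]
    (hr_meas : Measurable fun p : (Em m × Em n) × Em m × Em n => r p.1.1 p.1.2 p.2.1 p.2.2)
    (hr_nonneg : ∀ u v x y, 0 ≤ r u v x y)
    (hr_bdd : ∀ u v x y, r u v x y ≤ rbar)
    (hr_lip : ∀ u u' v x x' y y',
      |r u v x y - r u' v x' y'| ≤ Lr * (dist u u' + dist x x' + dist y y'))
    (hr_int : ∀ x y, ∫ u, ∫ v, r u v x y ∂nu ∂lam = 1)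
    (hlow : ∀ (v : Em n) (x : Em m) (y : Em n), δ⁻¹ ≤ ∫ u, r u v x y ∂lam) :
    ∀ (θ θ' : Measure (Em m)), IsProbabilityMeasure θ → IsProbabilityMeasure θ' →
    ∀ (y y' : Em n),
      (∫ v, dP (BayesPhi r lam v θ y) (BayesPhi r lam v θ' y') ∂nu)
        ≤ δ * (rbar + Lr) * (1 + δ * rbar) * (dP θ θ' + dist y y') :=
  stmt_4_general Lr δ rbar hLr hδ r lam nu hr_meas hr_nonneg hr_bdd hr_lip hlow
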